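/- arXiv:2308.06052 — 4 statements merged into one kernel-verified Lean document; each statement's English description precedes it below -/
import Mathlib

section
/- Let H be a real Hilbert space, L a normed space, B a normed space with linear inclusions B ⊆ H ⊆ L. Suppose |⟨f,g⟩_H| ≤ ‖f‖_L · ‖g‖_B for all f ∈ H, g ∈ B. Let P : H → H be the orthogonal projection onto a finite-dimensional (or more generally closed) subspace V ⊆ H, and suppose there is M > 0 such that ‖f − P f‖_L ≤ M ‖f‖_H for all f ∈ H. Then for all g ∈ B, ‖g − P g‖_L ≤ M² ‖g‖_B. -/
open RealInnerProductSpace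

/-- Abstract doubling theorem: doubled L₂ rate for smoother functions. -/
theorem stmt_0
    {H L B : Type*}
    [NormedAddCommGroup H] [InnerProductSpace ℝ H] [CompleteSpace H]
    [NormedAddCommGroup L] [NormedSpace ℝ L]
    [NormedAddCommGroup B] [NormedSpace ℝ B]
    (jH : H →ₗ[ℝ] L)  -- inclusion H ⊆ L
    (jB : B →ₗ[ℝ] H)  -- inclusion B ⊆ H
    (hdual : ∀ (f : H) (g : B), |⟪f, jB g⟫| ≤ ‖jH f‖ * ‖g‖)
    (V : Submodule ℝ H) [V.HasOrthogonalProjection]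
    (M : ℝ) (hM : 0 < M)
    (herr : ∀ f : H, ‖jH (f - (V.orthogonalProjectionOnto f : H))‖ ≤ M * ‖f‖) :
    ∀ g : B, ‖jH (jB g - (V.orthogonalProjectionOnto (jB g) : H))‖ ≤ M ^ 2 * ‖g‖ := by
  intro g
  set e : H := jB g - (V.orthogonalProjectionOnto (jB g) : H) with he
  have hemem : e ∈ Vᗮ := V.sub_starProjection_mem_orthogonal (jB g)
  have hPe : (V.orthogonalProjectionOnto e : H) = 0 := by
    rw [Submodule.orthogonalProjectionOnto_apply_of_mem_orthogonal hemem]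
    simp
  have h1 : ‖jH e‖ ≤ M * ‖e‖ := by
    have := herr e
    rwa [hPe, sub_zero] at this
  -- ‖e‖² = ⟪e, jB g⟫
  have horth : ⟪e, (V.orthogonalProjectionOnto (jB g) : H)⟫ = 0 := by
    rw [real_inner_comm]; exact hemem _ (Submodule.coe_mem _)
  have h2 : ‖e‖ ^ 2 = ⟪e, jB g⟫ := by
    have : ⟪e, e⟫ = ⟪e, jB g⟫ := by
      rw [he]
      rw [inner_sub_right, horth, sub_zero]
    rw [← this, ← real_inner_self_eq_norm_sq]
  have h3 : ‖e‖ ^ 2 ≤ M * ‖e‖ * ‖g‖ := by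
    calc ‖e‖ ^ 2 = ⟪e, jB g⟫ := h2
      _ ≤ |⟪e, jB g⟫| := le_abs_self _
      _ ≤ ‖jH e‖ * ‖g‖ := hdual e g
      _ ≤ M * ‖e‖ * ‖g‖ := by
          apply mul_le_mul_of_nonneg_right h1 (norm_nonneg _)
  have h4 : ‖e‖ ≤ M * ‖g‖ := by
    rcases eq_or_lt_of_le (norm_nonneg e) with h | h
    · rw [← h]; positivity
    · have := h3
      rw [sq] at this
      nlinarith
  calc ‖jH e‖ ≤ M * ‖e‖ := h1
    _ ≤ M * (M * ‖g‖) := by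
        exact mul_le_mul_of_nonneg_left h4 hM.le
    _ = M ^ 2 * ‖g‖ := by ring
end

section
/- Let H be a real Hilbert space, L and B normed spaces with B ⊆ H ⊆ L, satisfying |⟨f,g⟩_H| ≤ ‖f‖_L · ‖g‖_B for all f ∈ H, g ∈ B. Let P be the H-orthogonal projection onto a closed subspace V of H, and suppose ‖f − P f‖_L ≤ M ‖f‖_H for all f ∈ H with M > 0. Then for all g ∈ B, ‖g − P g‖_H ≤ M ‖g‖_B. -/
open RealInnerProductSpace

/-- Improved H-norm bound for smoother functions. -/
theorem stmt_1
    {H L B : Type*}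
    [NormedAddCommGroup H] [InnerProductSpace ℝ H] [CompleteSpace H]
    [NormedAddCommGroup L] [NormedSpace ℝ L]
    [NormedAddCommGroup B] [NormedSpace ℝ B]
    (jH : H →ₗ[ℝ] L)  -- inclusion H ⊆ L
    (jB : B →ₗ[ℝ] H)  -- inclusion B ⊆ H
    (hdual : ∀ (f : H) (g : B), |⟪f, jB g⟫| ≤ ‖jH f‖ * ‖g‖)
    (V : Submodule ℝ H) [V.HasOrthogonalProjection]
    (M : ℝ) (hM : 0 < M)
    (herr : ∀ f : H, ‖jH (f - (V.orthogonalProjectionOnto f : H))‖ ≤ M * ‖f‖) :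
    ∀ g : B, ‖jB g - (V.orthogonalProjectionOnto (jB g) : H)‖ ≤ M * ‖g‖ := by
  intro g
  set e : H := jB g - (V.orthogonalProjectionOnto (jB g) : H) with he
  have hperp : e ∈ Vᗮ := Submodule.sub_starProjection_mem_orthogonal (K := V) (jB g)
  have hPe : (V.orthogonalProjectionOnto e : H) = 0 := by
    exact congrArg Subtype.val (Submodule.orthogonalProjectionOnto_apply_of_mem_orthogonal hperp)
  have hsq : ⟪e, jB g⟫ = ‖e‖ ^ 2 := by
    have : ⟪e, (V.orthogonalProjectionOnto (jB g) : H)⟫ = 0 :=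
      real_inner_comm e _ ▸ hperp _ (V.orthogonalProjectionOnto (jB g)).2
    have h2 : ⟪e, jB g⟫ = ⟪e, e⟫ + ⟪e, (V.orthogonalProjectionOnto (jB g) : H)⟫ := by
      rw [← inner_add_right]; congr 1; rw [he]; abel
    rw [h2, this, add_zero, real_inner_self_eq_norm_sq]
  have hJe : ‖jH e‖ ≤ M * ‖e‖ := by
    have := herr e
    rwa [hPe, sub_zero] at this
  have key : ‖e‖ ^ 2 ≤ M * ‖e‖ * ‖g‖ := by
    calc ‖e‖ ^ 2 = ⟪e, jB g⟫ := hsq.symm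
    _ ≤ |⟪e, jB g⟫| := le_abs_self _
    _ ≤ ‖jH e‖ * ‖g‖ := hdual e g
    _ ≤ M * ‖e‖ * ‖g‖ := by gcongr
  rcases eq_or_lt_of_le (norm_nonneg e) with h0 | h0
  · rw [← h0]; positivity
  · have := le_of_mul_le_mul_right (by nlinarith [key] : ‖e‖ * ‖e‖ ≤ (M * ‖g‖) * ‖e‖) h0
    linarith [this]
end

section
/- Let g : [0,1] → ℝ be twice weakly differentiable with g'' ∈ L₂, g(0) = g'(0) = g'(1) = 0, and let ‖g‖_H² := g(0)² + ∫₀¹ |g'|². Then ‖g‖_H ≤ √(3/2) ‖g''‖_{L₂(0,1)}. -/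
open Set MeasureTheory intervalIntegral

lemma cs_aux (a b : ℝ) (hab : a ≤ b) (f h : ℝ → ℝ)
    (hf : ContinuousOn f (Icc a b)) (hh : ContinuousOn h (Icc a b)) :
    (∫ x in a..b, f x * h x)^2 ≤ (∫ x in a..b, f x^2) * (∫ x in a..b, h x^2) := by
  have hif : IntervalIntegrable (fun x => f x ^ 2) volume a b :=
    (hf.pow 2).intervalIntegrable_of_Icc hab
  have hih : IntervalIntegrable (fun x => h x ^ 2) volume a b :=
    (hh.pow 2).intervalIntegrable_of_Icc hab
  have hifh : IntervalIntegrable (fun x => f x * h x) volume a b :=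
    (hf.mul hh).intervalIntegrable_of_Icc hab
  have key : ∀ t : ℝ, 0 ≤ (∫ x in a..b, f x^2) * (t * t)
      + (2 * ∫ x in a..b, f x * h x) * t + ∫ x in a..b, h x^2 := by
    intro t
    have h1 : (0:ℝ) ≤ ∫ x in a..b, (t * f x + h x)^2 :=
      intervalIntegral.integral_nonneg hab (fun x _ => sq_nonneg _)
    have h2 : (∫ x in a..b, (t * f x + h x)^2)
        = (∫ x in a..b, f x^2) * (t * t) + (2 * ∫ x in a..b, f x * h x) * t
          + ∫ x in a..b, h x^2 := by
      have e : (fun x => (t * f x + h x)^2)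
          = fun x => (t*t) * f x^2 + ((2*t) * (f x * h x) + h x^2) := by
        funext x; ring
      rw [e, intervalIntegral.integral_add ((hif.const_mul _))
            ((hifh.const_mul _).add hih),
          intervalIntegral.integral_add (hifh.const_mul _) hih,
          intervalIntegral.integral_const_mul, intervalIntegral.integral_const_mul]
      ring
    rw [h2] at h1; linarith
  have hd := discrim_le_zero key
  rw [discrim] at hd
  nlinarith [hd]

/-- Example 2 continued: continuous embedding of B in H,
‖g‖_H ≤ √(3/2) ‖g''‖_{L₂}, where ‖g‖_H² = g(0)² + ∫₀¹ g'². -/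
theorem stmt_14
    (g g' g'' : ℝ → ℝ)
    (hg : ∀ x ∈ Icc (0:ℝ) 1, HasDerivAt g (g' x) x)
    (hg' : ∀ x ∈ Icc (0:ℝ) 1, HasDerivAt g' (g'' x) x)
    (hgc : ContinuousOn g (Icc 0 1)) (hg'c : ContinuousOn g' (Icc 0 1))
    (hg''c : ContinuousOn g'' (Icc 0 1))
    (hg0 : g 0 = 0) (hg'0 : g' 0 = 0) (hg'1 : g' 1 = 0) :
    (g 0 ^ 2 + ∫ x in (0:ℝ)..1, g' x ^ 2) ^ ((1:ℝ)/2) ≤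
      Real.sqrt (3/2) * (∫ x in (0:ℝ)..1, g'' x ^ 2) ^ ((1:ℝ)/2) := by
  set A := ∫ x in (0:ℝ)..1, g' x ^ 2 with hA
  set B := ∫ x in (0:ℝ)..1, g'' x ^ 2 with hB
  have h01 : (0:ℝ) ≤ 1 := by norm_num
  have huIcc : uIcc (0:ℝ) 1 = Icc 0 1 := uIcc_of_le h01
  -- integration by parts: ∫ g g'' = -A
  have hparts : (∫ x in (0:ℝ)..1, g x * g'' x) = -A := by
    have := intervalIntegral.integral_mul_deriv_eq_deriv_mul
      (u := g) (u' := g') (v := g') (v' := g'')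
      (fun x hx => hg x (huIcc ▸ hx)) (fun x hx => hg' x (huIcc ▸ hx))
      (hg'c.intervalIntegrable_of_Icc h01) (hg''c.intervalIntegrable_of_Icc h01)
    rw [hg0, hg'1] at this
    have : (∫ x in (0:ℝ)..1, g x * g'' x) = - ∫ x in (0:ℝ)..1, g' x * g' x := by
      simpa using this
    rw [this, hA]
    congr 1
    apply intervalIntegral.integral_congr
    intro x _; simp only []; ring
  have hAnn : 0 ≤ A := intervalIntegral.integral_nonneg h01 (fun x _ => sq_nonneg _)
  have hBnn : 0 ≤ B := intervalIntegral.integral_nonneg h01 (fun x _ => sq_nonneg _)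
  -- pointwise bound: g x ^ 2 ≤ A on [0,1]
  have hpt : ∀ x ∈ Icc (0:ℝ) 1, g x ^ 2 ≤ A := by
    intro x hx
    have hx0 : (0:ℝ) ≤ x := hx.1
    have hsub : Icc (0:ℝ) x ⊆ Icc 0 1 := Icc_subset_Icc le_rfl hx.2
    have hftc : (∫ t in (0:ℝ)..x, g' t) = g x - g 0 := by
      apply intervalIntegral.integral_eq_sub_of_hasDerivAt
      · intro t ht
        exact hg t (hsub ((uIcc_of_le hx0) ▸ ht))
      · exact ((hg'c.mono hsub).intervalIntegrable_of_Icc hx0)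
    have hgx : g x = ∫ t in (0:ℝ)..x, g' t := by rw [hftc, hg0]; ring
    have hcs := cs_aux 0 x hx0 (fun _ => (1:ℝ)) g'
      continuousOn_const (hg'c.mono hsub)
    simp only [one_mul, one_pow] at hcs
    rw [intervalIntegral.integral_const] at hcs
    have hmono : (∫ t in (0:ℝ)..x, g' t ^ 2) ≤ A := by
      rw [hA]
      apply intervalIntegral.integral_mono_interval le_rfl hx0 hx.2
      · filter_upwards with t using sq_nonneg _
      · exact (hg'c.pow 2).intervalIntegrable_of_Icc h01
    have hxle : x - 0 ≤ 1 := by linarith [hx.2]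
    have hI2nn : 0 ≤ ∫ t in (0:ℝ)..x, g' t ^ 2 :=
      intervalIntegral.integral_nonneg hx0 (fun t _ => sq_nonneg _)
    calc g x ^ 2 = (∫ t in (0:ℝ)..x, g' t)^2 := by rw [hgx]
      _ ≤ (x - 0) • (1:ℝ) * ∫ t in (0:ℝ)..x, g' t ^ 2 := hcs
      _ ≤ 1 * A := by
          simp only [smul_eq_mul, mul_one]
          nlinarith
      _ = A := one_mul A
  -- ∫ g² ≤ A
  have hA' : (∫ x in (0:ℝ)..1, g x ^ 2) ≤ A := by
    have : (∫ x in (0:ℝ)..1, g x ^ 2) ≤ ∫ _x in (0:ℝ)..1, A := by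
      apply intervalIntegral.integral_mono_on h01
        ((hgc.pow 2).intervalIntegrable_of_Icc h01) intervalIntegrable_const
      exact hpt
    simpa using this
  have hA'nn : 0 ≤ ∫ x in (0:ℝ)..1, g x ^ 2 :=
    intervalIntegral.integral_nonneg h01 (fun x _ => sq_nonneg _)
  -- Cauchy-Schwarz main
  have hcs := cs_aux 0 1 h01 g g'' hgc hg''c
  rw [hparts] at hcs
  -- A² ≤ (∫g²) B ≤ A B  ⇒  A ≤ B
  have hAB : A ≤ B := by
    rcases eq_or_lt_of_le hAnn with hA0 | hA0
    · linarith
    · have : A^2 ≤ A * B := by nlinarith [mul_le_mul_of_nonneg_right hA' hBnn]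
      nlinarith
  rw [hg0]
  have hs32 : (1:ℝ) ≤ Real.sqrt (3/2) := by
    rw [show (1:ℝ) = Real.sqrt 1 by simp]
    exact Real.sqrt_le_sqrt (by norm_num)
  calc ((0:ℝ)^2 + A) ^ ((1:ℝ)/2) = A ^ ((1:ℝ)/2) := by norm_num
    _ ≤ B ^ ((1:ℝ)/2) := Real.rpow_le_rpow hAnn hAB (by norm_num)
    _ ≤ Real.sqrt (3/2) * B ^ ((1:ℝ)/2) := by
        nlinarith [Real.rpow_nonneg hBnn ((1:ℝ)/2)]
end

section
/- Let H be an RKHS on D continuously embedded in L₂(D), and B a normed space continuously embedded in H with |⟨f,g⟩_H| ≤ ‖f‖_{L₂} ‖g‖_B for all f ∈ H, g ∈ B. Given distinct points t₁,…,tₙ ∈ D, suppose the kernel interpolant fₙ (the element of span{K(t_k,·)} interpolating f at the t_k) satisfies ‖f − fₙ‖_{L₂} ≤ c n^{−κ} ‖f‖_H for all f ∈ H. Then for every g ∈ B, its kernel interpolant gₙ at the same points satisfies ‖g − gₙ‖_{L₂} ≤ c² n^{−2κ} ‖g‖_B and ‖g − gₙ‖_H ≤ c n^{−κ} ‖g‖_B.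 -/
open RealInnerProductSpace

/-- Doubled L₂ convergence rate and improved H-norm rate for kernel
interpolation in an RKHS (Theorem 4.1).  `jH : H →ₗ L` is the embedding of
the RKHS into L₂(D), `jB : B →ₗ H` the embedding of the smoother space B,
`k y = K(y,·)` the kernel sections and `ι` the realization of elements of H
as functions on D. -/
theorem stmt_16
    {H D L B : Type*}
    [NormedAddCommGroup H] [InnerProductSpace ℝ H] [CompleteSpace H]
    [NormedAddCommGroup L] [NormedSpace ℝ L]
    [NormedAddCommGroup B] [NormedSpace ℝ B]
    (ι : H → D → ℝ) (k : D → H)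
    (hrep : ∀ (f : H) (y : D), ⟪k y, f⟫ = ι f y)
    (jH : H →ₗ[ℝ] L)  -- embedding H ↪ L₂(D)
    (jB : B →ₗ[ℝ] H)  -- embedding B ↪ H
    (hdual : ∀ (f : H) (g : B), |⟪f, jB g⟫| ≤ ‖jH f‖ * ‖g‖)
    (n : ℕ) (hn : 0 < n) (t : Fin n → D) (ht : Function.Injective t)
    (c κ : ℝ) (hc : 0 < c) (hκ : 0 < κ)
    -- the known L₂ error bound for kernel interpolation of arbitrary f ∈ H
    (herr : ∀ f fn : H, fn ∈ Submodule.span ℝ (Set.range fun i => k (t i)) →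
      (∀ i : Fin n, ι fn (t i) = ι f (t i)) →
      ‖jH (f - fn)‖ ≤ c * (n : ℝ) ^ (-κ) * ‖f‖) :
    -- doubled rate for the kernel interpolant gₙ of g ∈ B at the same points
    ∀ (g : B) (gn : H), gn ∈ Submodule.span ℝ (Set.range fun i => k (t i)) →
      (∀ i : Fin n, ι gn (t i) = ι (jB g) (t i)) →
      ‖jH (jB g - gn)‖ ≤ c ^ 2 * (n : ℝ) ^ (-(2 * κ)) * ‖g‖ ∧
      ‖jB g - gn‖ ≤ c * (n : ℝ) ^ (-κ) * ‖g‖ := by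

  intro g gn hgn hint
  set e := jB g - gn with he
  -- e is orthogonal to all kernel sections at the nodes
  have hker : ∀ i : Fin n, ⟪k (t i), e⟫ = 0 := by
    intro i
    rw [he, inner_sub_right, hrep, hrep, hint i, sub_self]
  have horth : ∀ u ∈ Submodule.span ℝ (Set.range fun i => k (t i)), ⟪u, e⟫ = 0 := by
    intro u hu
    induction hu using Submodule.span_induction with
    | mem x hx =>
      obtain ⟨i, rfl⟩ := hx
      exact hker i
    | zero => simp
    | add x y _ _ hx hy => rw [inner_add_left, hx, hy, add_zero]
    | smul a x _ hx => rw [real_inner_smul_left, hx, mul_zero]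
  -- H-norm to L₂-norm bound via herr with fn = 0
  have hH : ‖jH e‖ ≤ c * (n : ℝ) ^ (-κ) * ‖e‖ := by
    have h0 : ∀ i : Fin n, ι (0 : H) (t i) = ι e (t i) := by
      intro i
      rw [← hrep, ← hrep, hker i, inner_zero_right]
    have := herr e 0 (Submodule.zero_mem _) h0
    simpa using this
  -- squared H norm bound via duality
  have hsq : ‖e‖ ^ 2 ≤ ‖jH e‖ * ‖g‖ := by
    have h1 : ⟪e, e⟫ = ⟪e, jB g⟫ := by
      have : ⟪e, gn⟫ = 0 := by
        rw [real_inner_comm]; exact horth gn hgn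
      rw [he]
      rw [inner_sub_right, this, sub_zero]
    calc ‖e‖ ^ 2 = ⟪e, e⟫ := (real_inner_self_eq_norm_sq e).symm
    _ = ⟪e, jB g⟫ := h1
    _ ≤ |⟪e, jB g⟫| := le_abs_self _
    _ ≤ ‖jH e‖ * ‖g‖ := hdual e g
  have hnκ : (0 : ℝ) < (n : ℝ) ^ (-κ) := by
    apply Real.rpow_pos_of_pos
    exact_mod_cast hn
  -- H-norm bound
  have hHbound : ‖e‖ ≤ c * (n : ℝ) ^ (-κ) * ‖g‖ := by
    rcases eq_or_lt_of_le (norm_nonneg e) with h0 | h0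
    · rw [← h0]; positivity
    · have : ‖e‖ * ‖e‖ ≤ (c * (n : ℝ) ^ (-κ) * ‖g‖) * ‖e‖ := by
        calc ‖e‖ * ‖e‖ = ‖e‖ ^ 2 := (sq ‖e‖).symm
        _ ≤ ‖jH e‖ * ‖g‖ := hsq
        _ ≤ (c * (n : ℝ) ^ (-κ) * ‖e‖) * ‖g‖ := mul_le_mul_of_nonneg_right hH (norm_nonneg g)
        _ = (c * (n : ℝ) ^ (-κ) * ‖g‖) * ‖e‖ := by ring
      exact le_of_mul_le_mul_right this h0
  refine ⟨?_, hHbound⟩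
  have hpow : (n : ℝ) ^ (-(2 * κ)) = (n : ℝ) ^ (-κ) * (n : ℝ) ^ (-κ) := by
    rw [← Real.rpow_add (by exact_mod_cast hn)]
    ring_nf
  calc ‖jH e‖ ≤ c * (n : ℝ) ^ (-κ) * ‖e‖ := hH
  _ ≤ c * (n : ℝ) ^ (-κ) * (c * (n : ℝ) ^ (-κ) * ‖g‖) := by
      apply mul_le_mul_of_nonneg_left hHbound
      positivity
  _ = c ^ 2 * (n : ℝ) ^ (-(2 * κ)) * ‖g‖ := by rw [hpow]; ring
end
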